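/- arXiv:1611.07255 — 2 statements merged into one kernel-verified Lean document; each statement's English description precedes it below -/
import Mathlib

section
/- The σ-reduction is confluent. -/
/-- Terms of the call-by-value λ-calculus, in de Bruijn notation. -/
inductive Term : Type
  | var : ℕ → Term
  | lam : Term → Term
  | app : Term → Term → Term

namespace Term

/-- Values are variables and abstractions. -/
def isValue : Term → Prop
  | var _ => True
  | lam _ => True
  | app _ _ => False

/-- Shift free de Bruijn indices ≥ d by one. -/
def lift (d : ℕ) : Term → Term
  | var n => if n < d then var n else var (n+1)
  | lam M => lam (lift (d+1) M)
  | app M N => app (lift d M) (lift d N)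

/-- Capture-avoiding substitution of `V` for index `k`. -/
def subst : Term → ℕ → Term → Term
  | var n, k, V => if n = k then V else if k < n then var (n-1) else var n
  | lam M, k, V => lam (subst M (k+1) (lift 0 V))
  | app M N, k, V => app (subst M k V) (subst N k V)

/-- Apply a term to a list of arguments: `appList M [M₁,…,Mₘ] = M M₁ … Mₘ`. -/
def appList : Term → List Term → Term
  | M, [] => M
  | M, N :: Ns => appList (app M N) Ns

/-- Root σ-reduction rules σ₁ and σ₃ (freshness handled by lifting). -/
inductive SigmaBase : Term → Term → Prop
  | sigma1 (M N L : Term) :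
      SigmaBase (app (app (lam M) N) L) (app (lam (app M (lift 0 L))) N)
  | sigma3 (V L N : Term) : isValue V →
      SigmaBase (app V (app (lam L) N)) (app (lam (app (lift 0 V) L)) N)

/-- Root rules of v-reduction: β_v, σ₁ and σ₃. -/
inductive VBase : Term → Term → Prop
  | beta (M V : Term) : isValue V → VBase (app (lam M) V) (subst M 0 V)
  | sigma1 (M N L : Term) :
      VBase (app (app (lam M) N) L) (app (lam (app M (lift 0 L))) N)
  | sigma3 (V L N : Term) : isValue V →
      VBase (app V (app (lam L) N)) (app (lam (app (lift 0 V) L)) N)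

/-- Contextual closure of a root relation. -/
inductive Ctx (r : Term → Term → Prop) : Term → Term → Prop
  | base {M M'} : r M M' → Ctx r M M'
  | lam {M M'} : Ctx r M M' → Ctx r (lam M) (lam M')
  | appL {M M'} (N : Term) : Ctx r M M' → Ctx r (app M N) (app M' N)
  | appR (M : Term) {N N'} : Ctx r N N' → Ctx r (app M N) (app M N')

/-- σ-reduction: contextual closure of σ₁ ∪ σ₃. -/
def SigmaRed : Term → Term → Prop := Ctx SigmaBase

/-- v-reduction: contextual closure of β_v ∪ σ₁ ∪ σ₃. -/
def Red : Term → Term → Prop := Ctx VBase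

/-- Head β_v-reduction. -/
inductive HeadBeta : Term → Term → Prop
  | beta (M V : Term) (Ms : List Term) : isValue V →
      HeadBeta (appList (app (lam M) V) Ms) (appList (subst M 0 V) Ms)
  | right (V : Term) {N N'} (Ms : List Term) : isValue V → HeadBeta N N' →
      HeadBeta (appList (app V N) Ms) (appList (app V N') Ms)

/-- Head σ-reduction. -/
inductive HeadSigma : Term → Term → Prop
  | sigma1 (M N L : Term) (Ms : List Term) :
      HeadSigma (appList (app (app (lam M) N) L) Ms)
                (appList (app (lam (app M (lift 0 L))) N) Ms)
  | sigma3 (V L N : Term) (Ms : List Term) : isValue V →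
      HeadSigma (appList (app V (app (lam L) N)) Ms)
                (appList (app (lam (app (lift 0 V) L)) N) Ms)
  | right (V : Term) {N N'} (Ms : List Term) : isValue V → HeadSigma N N' →
      HeadSigma (appList (app V N) Ms) (appList (app V N') Ms)

/-- Head v-reduction: head β_v ∪ head σ. -/
def HeadRed (M N : Term) : Prop := HeadBeta M N ∨ HeadSigma M N

/-- Internal v-reduction: v-steps that are not head v-steps. -/
def IntRed (M N : Term) : Prop := Red M N ∧ ¬ HeadRed M N

/-- Parallel reduction of the shuffling calculus λ_v^σ. -/
inductive Par : Term → Term → Prop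
  | var (x : ℕ) {Ms Ms' : List Term} : List.Forall₂ Par Ms Ms' →
      Par (appList (var x) Ms) (appList (var x) Ms')
  | lam {M M'} {Ms Ms' : List Term} : Par M M' → List.Forall₂ Par Ms Ms' →
      Par (appList (lam M) Ms) (appList (lam M') Ms')
  | beta {M M' V V'} {Ms Ms' : List Term} : isValue V → isValue V' →
      Par M M' → Par V V' → List.Forall₂ Par Ms Ms' →
      Par (appList (app (lam M) V) Ms) (appList (subst M' 0 V') Ms')
  | sigma1 {M M' N N' L L'} {Ms Ms' : List Term} :
      Par M M' → Par N N' → Par L L' → List.Forall₂ Par Ms Ms' →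
      Par (appList (app (app (lam M) N) L) Ms)
          (appList (app (lam (app M' (lift 0 L'))) N') Ms')
  | sigma3 {V V' L L' N N'} {Ms Ms' : List Term} : isValue V → isValue V' →
      Par V V' → Par L L' → Par N N' → List.Forall₂ Par Ms Ms' →
      Par (appList (app V (app (lam L) N)) Ms)
          (appList (app (lam (app (lift 0 V') L')) N') Ms')

/-- Internal parallel reduction. -/
inductive IPar : Term → Term → Prop
  | lam {N N'} : Par N N' → IPar (lam N) (lam N')
  | var (x : ℕ) : IPar (var x) (var x)
  | right {V V' N N'} {Ms Ms' : List Term} : isValue V → isValue V' →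
      Par V V' → IPar N N' → List.Forall₂ Par Ms Ms' →
      IPar (appList (app V N) Ms) (appList (app V' N') Ms')

/-- One-hole contexts. -/
inductive Ctx1 : Type
  | hole : Ctx1
  | lam : Ctx1 → Ctx1
  | appL : Ctx1 → Term → Ctx1
  | appR : Term → Ctx1 → Ctx1

/-- Capture-allowing hole filling. -/
def fill : Ctx1 → Term → Term
  | .hole, M => M
  | .lam C, M => lam (fill C M)
  | .appL C N, M => app (fill C M) N
  | .appR N C, M => app N (fill C M)

/-- `M` halts: head β_v-reduction from `M` reaches a value. -/
def Halts (M : Term) : Prop := ∃ V, isValue V ∧ Relation.ReflTransGen HeadBeta M V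

end Term

/-! σ-reduction is terminating: both rules move an argument under a λ, which lowers the
multiplicative `weight`, e.g. `(m + 1) n l > (m l + 1) n`. It is also locally confluent: apart
from trivially commuting steps, the only overlaps are a σ₁- or σ₃-redex whose λ-argument is
itself a σ₃-redex, and each is closed by one step on one side and two on the other. As this is
not strong confluence in either orientation, Newman's lemma concludes. -/

namespace Relation

variable {α : Type*} {r : α → α → Prop}

theorem church_rosser_of_wellFounded (hwf : WellFounded (flip r))
    (hlc : ∀ a b c, r a b → r a c → Join (ReflTransGen r) b c) {a b c : α}
    (hab : ReflTransGen r a b) (hac : ReflTransGen r a c) : Join (ReflTransGen r) b c := by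
  induction a using hwf.induction generalizing b c with
  | _ a ih =>
  rcases hab.cases_head with rfl | ⟨b₁, hab₁, hb₁b⟩
  · exact ⟨c, hac, .refl⟩
  rcases hac.cases_head with rfl | ⟨c₁, hac₁, hc₁c⟩
  · exact ⟨b, .refl, hab⟩
  obtain ⟨d, hb₁d, hc₁d⟩ := hlc a b₁ c₁ hab₁ hac₁
  obtain ⟨e, hbe, hde⟩ := ih b₁ hab₁ hb₁b hb₁d
  obtain ⟨f, hcf, hef⟩ := ih c₁ hac₁ hc₁c (hc₁d.trans hde)
  exact ⟨f, hbe.trans hef, hcf⟩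

end Relation

namespace Term

open Relation

def weight : Term → ℕ
  | var _ => 2
  | lam M => weight M + 1
  | app M N => weight M * weight N

lemma two_le_weight (M : Term) : 2 ≤ weight M := by
  induction M with
  | var n => simp [weight]
  | lam M ih => simp [weight]; omega
  | app M N ihM ihN => simp only [weight]; nlinarith

lemma weight_lift (M : Term) (d : ℕ) : weight (lift d M) = weight M := by
  induction M generalizing d with
  | var n => simp only [lift]; split <;> rfl
  | lam M ih => simp [lift, weight, ih]
  | app M N ihM ihN => simp [lift, weight, ihM, ihN]

lemma SigmaBase.weight_lt {a b : Term} (h : SigmaBase a b) : weight b < weight a := by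
  cases h with
  | sigma1 M N L =>
    have := two_le_weight M; have := two_le_weight N; have := two_le_weight L
    simp only [weight, weight_lift]
    nlinarith
  | sigma3 V L N =>
    have := two_le_weight V; have := two_le_weight N; have := two_le_weight L
    simp only [weight, weight_lift]
    nlinarith

lemma SigmaRed.weight_lt {a b : Term} (h : SigmaRed a b) : weight b < weight a := by
  induction h with
  | base h => exact h.weight_lt
  | lam _ ih => simpa [weight] using ih
  | appL N _ ih => exact Nat.mul_lt_mul_of_lt_of_le ih le_rfl (by linarith [two_le_weight N])
  | appR M _ ih => exact Nat.mul_lt_mul_of_le_of_lt le_rfl ih (by linarith [two_le_weight M])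

lemma wellFounded_flip_sigmaRed : WellFounded (flip SigmaRed) :=
  (InvImage.wf weight wellFounded_lt).mono fun _ _ h => h.weight_lt

lemma lift_succ_lift (M : Term) {d e : ℕ} (h : e ≤ d) :
    lift (d + 1) (lift e M) = lift e (lift d M) := by
  induction M generalizing d e with
  | var n =>
    by_cases h1 : n < e
    · simp [lift, h1, show n < d by omega, show n < d + 1 by omega]
    · by_cases h2 : n < d
      · simp [lift, h1, h2]
      · simp [lift, h1, h2]; omega
  | lam M ih => simp only [lift, ih (Nat.succ_le_succ h)]
  | app M N ihM ihN => simp [lift, ihM h, ihN h]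

lemma isValue.lift {V : Term} (h : isValue V) (d : ℕ) : isValue (lift d V) := by
  cases V with
  | var n => simp only [Term.lift]; split <;> trivial
  | lam M => trivial
  | app M N => exact h.elim

lemma SigmaBase.lift {a b : Term} (h : SigmaBase a b) (d : ℕ) :
    SigmaBase (lift d a) (lift d b) := by
  cases h with
  | sigma1 M N L =>
    simp only [Term.lift, lift_succ_lift L (Nat.zero_le d)]
    exact .sigma1 _ _ _
  | sigma3 V L N hV =>
    simp only [Term.lift, lift_succ_lift V (Nat.zero_le d)]
    exact .sigma3 _ _ _ (hV.lift d)

lemma SigmaRed.lift {a b : Term} (h : SigmaRed a b) (d : ℕ) : SigmaRed (lift d a) (lift d b) := by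
  induction h generalizing d with
  | base h => exact .base (h.lift d)
  | lam _ ih => exact .lam (ih (d + 1))
  | appL N _ ih => exact .appL _ (ih d)
  | appR M _ ih => exact .appR _ (ih d)

section Congruence

variable {r : Term → Term → Prop} {M M' N N' : Term}

lemma Ctx.reflTransGen_lam (h : ReflTransGen (Ctx r) M M') :
    ReflTransGen (Ctx r) (Term.lam M) (Term.lam M') :=
  h.lift Term.lam fun _ _ => .lam

lemma Ctx.reflTransGen_appL (N : Term) (h : ReflTransGen (Ctx r) M M') :
    ReflTransGen (Ctx r) (app M N) (app M' N) :=
  h.lift (app · N) fun _ _ => .appL N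

lemma Ctx.reflTransGen_appR (M : Term) (h : ReflTransGen (Ctx r) N N') :
    ReflTransGen (Ctx r) (app M N) (app M N') :=
  h.lift (app M) fun _ _ => .appR M

lemma Ctx.join_lam (h : Join (ReflTransGen (Ctx r)) M M') :
    Join (ReflTransGen (Ctx r)) (Term.lam M) (Term.lam M') :=
  let ⟨_, h₁, h₂⟩ := h; ⟨_, reflTransGen_lam h₁, reflTransGen_lam h₂⟩

lemma Ctx.join_appL (N : Term) (h : Join (ReflTransGen (Ctx r)) M M') :
    Join (ReflTransGen (Ctx r)) (app M N) (app M' N) :=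
  let ⟨_, h₁, h₂⟩ := h; ⟨_, reflTransGen_appL N h₁, reflTransGen_appL N h₂⟩

lemma Ctx.join_appR (M : Term) (h : Join (ReflTransGen (Ctx r)) N N') :
    Join (ReflTransGen (Ctx r)) (app M N) (app M N') :=
  let ⟨_, h₁, h₂⟩ := h; ⟨_, reflTransGen_appR M h₁, reflTransGen_appR M h₂⟩

end Congruence

lemma SigmaBase.eq {a b c : Term} (h₁ : SigmaBase a b) (h₂ : SigmaBase a c) : b = c := by
  cases h₁ <;> cases h₂ <;> first | rfl | contradiction

lemma join_sigma1_sigma3 (M A B L : Term) :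
    Join (ReflTransGen SigmaRed) (app (lam (app M (lift 0 L))) (app (lam A) B))
      (app (app (lam (app (lift 0 (lam M)) A)) B) L) := by
  refine ⟨app (lam (app (lam (app (lift 1 M) (lift 0 (lift 0 L)))) A)) B,
    .single (.base ?_), ?_⟩
  · simpa [lift, lift_succ_lift L (le_refl 0)] using
      SigmaBase.sigma3 (lam (app M (lift 0 L))) A B trivial
  · refine .head (.base (.sigma1 _ _ _)) (.single (.appL _ (.lam (.base ?_))))
    simpa [lift] using SigmaBase.sigma1 (lift 1 M) A (lift 0 L)

lemma join_sigma3_sigma3 {V : Term} (hV : isValue V) (A K C : Term) :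
    Join (ReflTransGen SigmaRed) (app (lam (app (lift 0 V) A)) (app (lam K) C))
      (app V (app (lam (app (lift 0 (lam A)) K)) C)) := by
  refine ⟨app (lam (app (lam (app (lift 0 (lift 0 V)) (lift 1 A))) K)) C,
    .single (.base ?_), ?_⟩
  · simpa [lift, lift_succ_lift V (le_refl 0)] using
      SigmaBase.sigma3 (lam (app (lift 0 V) A)) K C trivial
  · refine .head (.base (.sigma3 _ _ _ hV)) (.single (.appL _ (.lam (.base ?_))))
    simpa [lift] using SigmaBase.sigma3 (lift 0 V) (lift 1 A) K (hV.lift 0)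

lemma join_sigma1_sigmaRed {M N L c : Term} (h : SigmaRed (app (app (lam M) N) L) c) :
    Join (ReflTransGen SigmaRed) (app (lam (app M (lift 0 L))) N) c := by
  cases h with
  | base h => obtain rfl := (SigmaBase.sigma1 M N L).eq h; exact ⟨_, .refl, .refl⟩
  | appL _ h =>
    cases h with
    | base h => cases h with | sigma3 _ A B => exact join_sigma1_sigma3 M A B L
    | appL _ h =>
      cases h with
      | base h => cases h
      | lam h =>
        exact ⟨_, .single (.appL _ (.lam (.appL _ h))), .single (.base (.sigma1 _ _ _))⟩
    | appR _ h => exact ⟨_, .single (.appR _ h), .single (.base (.sigma1 _ _ _))⟩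
  | appR _ h =>
    exact ⟨_, .single (.appL _ (.lam (.appR _ (SigmaRed.lift h 0)))),
      .single (.base (.sigma1 _ _ _))⟩

lemma join_sigma3_sigmaRed {V L N c : Term} (hV : isValue V)
    (h : SigmaRed (app V (app (lam L) N)) c) :
    Join (ReflTransGen SigmaRed) (app (lam (app (lift 0 V) L)) N) c := by
  cases h with
  | base h => obtain rfl := (SigmaBase.sigma3 V L N hV).eq h; exact ⟨_, .refl, .refl⟩
  | appL _ h =>
    cases h with
    | base h => cases h <;> contradiction
    | lam h =>
      exact ⟨_, .single (.appL _ (.lam (.appL _ (SigmaRed.lift (.lam h) 0)))),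
        .single (.base (.sigma3 _ _ _ trivial))⟩
    | appL _ h | appR _ h => contradiction
  | appR _ h =>
    cases h with
    | base h => cases h with | sigma3 _ K C => exact join_sigma3_sigma3 hV L K C
    | appL _ h =>
      cases h with
      | base h => cases h
      | lam h =>
        exact ⟨_, .single (.appL _ (.lam (.appR _ h))), .single (.base (.sigma3 _ _ _ hV))⟩
    | appR _ h => exact ⟨_, .single (.appR _ h), .single (.base (.sigma3 _ _ _ hV))⟩

lemma SigmaBase.join_sigmaRed {a b c : Term} (hb : SigmaBase a b) (hc : SigmaRed a c) :
    Join (ReflTransGen SigmaRed) b c := by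
  cases hb with
  | sigma1 => exact join_sigma1_sigmaRed hc
  | sigma3 _ _ _ hV => exact join_sigma3_sigmaRed hV hc

lemma SigmaRed.join {a b c : Term} (hb : SigmaRed a b) (hc : SigmaRed a c) :
    Join (ReflTransGen SigmaRed) b c := by
  induction hb generalizing c with
  | base hb => exact hb.join_sigmaRed hc
  | lam _ ih =>
    cases hc with
    | base hc => cases hc
    | lam hc => exact Ctx.join_lam (ih hc)
  | appL N hb ih =>
    cases hc with
    | base hc => exact symm (hc.join_sigmaRed (.appL N hb))
    | appL _ hc => exact Ctx.join_appL N (ih hc)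
    | appR _ hc => exact ⟨_, .single (.appR _ hc), .single (.appL _ hb)⟩
  | appR M hb ih =>
    cases hc with
    | base hc => exact symm (hc.join_sigmaRed (.appR M hb))
    | appL _ hc => exact ⟨_, .single (.appL _ hc), .single (.appR _ hb)⟩
    | appR _ hc => exact Ctx.join_appR M (ih hc)

end Term

open Term Relation in
theorem sigma_confluent :
    ∀ M N L : Term, ReflTransGen SigmaRed M N → ReflTransGen SigmaRed M L →
      ∃ P, ReflTransGen SigmaRed N P ∧ ReflTransGen SigmaRed L P :=
  fun _ _ _ => church_rosser_of_wellFounded wellFounded_flip_sigmaRed fun _ _ _ => SigmaRed.join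
end

section
/- Single-step commutation of head reductions: if M head-σ-reduces to L and L head-β_v-reduces to N, then there exists L' such that M head-β_v-reduces to L' and L' head-σ-reduces to N in at most one step (i.e. L' = N or L' head-σ-reduces to N). -/
namespace Term

/-- Spine decomposition: head and list of arguments. -/
def spine : Term → Term × List Term
  | var n => (var n, [])
  | lam M => (lam M, [])
  | app M N => ((spine M).1, (spine M).2 ++ [N])

lemma spine_appList (H : Term) (Ms : List Term) :
    spine (appList H Ms) = ((spine H).1, (spine H).2 ++ Ms) := by
  induction Ms generalizing H with
  | nil => simp [appList]
  | cons a Ms ih => simp [appList, ih, spine]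

lemma spine_value {V : Term} (hV : isValue V) : spine V = (V, []) := by
  cases V <;> simp [spine, isValue] at hV ⊢

lemma decomp_unique {V V' N N' : Term} {Ms Ms' : List Term}
    (hV : isValue V) (hV' : isValue V')
    (h : appList (app V N) Ms = appList (app V' N') Ms') :
    V = V' ∧ N = N' ∧ Ms = Ms' := by
  have h' := congrArg spine h
  rw [spine_appList, spine_appList] at h'
  simp [spine, spine_value hV, spine_value hV'] at h'
  exact h'

lemma appList_app_not_value (A B : Term) (Ms : List Term) :
    ¬ isValue (appList (app A B) Ms) := by
  induction Ms generalizing A B with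
  | nil => simp [appList, isValue]
  | cons a Ms ih => exact ih _ _

lemma headSigma_not_value {M N : Term} (h : HeadSigma M N) : ¬ isValue N := by
  cases h <;> exact appList_app_not_value _ _ _

lemma subst_lift (M : Term) (d : ℕ) (V : Term) : subst (lift d M) d V = M := by
  induction M generalizing d V with
  | var n =>
      by_cases h : n < d
      · simp [lift, subst, h, Nat.ne_of_lt h, Nat.not_lt.mpr (Nat.le_of_lt h)]
      · have h1 : ¬ n + 1 = d := by omega
        have h2 : d < n + 1 := by omega
        simp [lift, subst, h, h1, h2]
  | lam M ih => simp [lift, subst, ih]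
  | app M N ihM ihN => simp [lift, subst, ihM, ihN]

lemma headBeta_inv {V N T' : Term} {Ms : List Term} (hV : isValue V)
    (h : HeadBeta (appList (app V N) Ms) T') :
    (∃ M₀, V = lam M₀ ∧ isValue N ∧ T' = appList (subst M₀ 0 N) Ms) ∨
    (∃ N', HeadBeta N N' ∧ T' = appList (app V N') Ms) := by
  generalize hT : appList (app V N) Ms = T at h
  cases h with
  | beta M₀ W Ms' hW =>
      obtain ⟨e1, e2, e3⟩ := decomp_unique hV (by trivial) hT
      subst e1; subst e2; subst e3
      exact Or.inl ⟨M₀, rfl, hW, rfl⟩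
  | right W Ms' hW hstep =>
      obtain ⟨e1, e2, e3⟩ := decomp_unique hV hW hT
      subst e1; subst e2; subst e3
      exact Or.inr ⟨_, hstep, rfl⟩

end Term

open Term Relation in
theorem head_commute_one {M L N : Term} (h1 : HeadSigma M L) (h2 : HeadBeta L N) :
    ∃ L2, HeadBeta M L2 ∧ (L2 = N ∨ HeadSigma L2 N) := by
  induction h1 generalizing N with
  | sigma1 M₀ N₀ L₀ Ms =>
      rcases headBeta_inv (by trivial) h2 with ⟨M₁, hM₁, hNval, rfl⟩ | ⟨N₀', hstep, rfl⟩
      · injection hM₁ with hM₁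
        subst hM₁
        refine ⟨_, HeadBeta.beta M₀ N₀ (L₀ :: Ms) hNval, Or.inl ?_⟩
        simp [appList, subst, subst_lift]
      · exact ⟨_, HeadBeta.right (lam M₀) (L₀ :: Ms) trivial hstep,
          Or.inr (HeadSigma.sigma1 M₀ N₀' L₀ Ms)⟩
  | sigma3 V₀ L₀ N₀ Ms hV =>
      rcases headBeta_inv (by trivial) h2 with ⟨M₁, hM₁, hNval, rfl⟩ | ⟨N₀', hstep, rfl⟩
      · injection hM₁ with hM₁
        subst hM₁
        refine ⟨_, HeadBeta.right V₀ Ms hV (HeadBeta.beta L₀ N₀ [] hNval), Or.inl ?_⟩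
        simp [appList, subst, subst_lift]
      · exact ⟨_, HeadBeta.right V₀ Ms hV
            (HeadBeta.right (lam L₀) [] trivial hstep),
          Or.inr (HeadSigma.sigma3 V₀ L₀ N₀' Ms hV)⟩
  | right V Ms hV hσ ih =>
      rcases headBeta_inv hV h2 with ⟨M₁, hM₁, hNval, rfl⟩ | ⟨N₀', hstep, rfl⟩
      · exact absurd hNval (headSigma_not_value hσ)
      · obtain ⟨L2', hb, hrest⟩ := ih hstep
        refine ⟨_, HeadBeta.right V Ms hV hb, ?_⟩
        rcases hrest with rfl | hs
        · exact Or.inl rfl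
        · exact Or.inr (HeadSigma.right V Ms hV hs)
end
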